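/- Let I_0(t) denote the family of integrals I_λ = ∫_0^∞ f_{k,λ}^α(x) dx for the noncentral chi-squared PDF. For k > 1, α > 0 with k > 2 - 2/α, the map λ ↦ ∫_0^∞ f_{k,λ}^α(x) dx is continuous on (0,∞): for any λ₀ > 0, ∫_0^∞ f_{k,λ}^α(x) dx → ∫_0^∞ f_{k,λ₀}^α(x) dx as λ → λ₀. -/

import Mathlib

open Real MeasureTheory Set Filter

/-- Modified Bessel function of the first kind of order `ν`. -/
noncomputable def besselI (ν x : ℝ) : ℝ :=
  ∑' m : ℕ, (1 / ((m.factorial : ℝ) * Real.Gamma ((m : ℝ) + ν + 1))) *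
    (x / 2) ^ (2 * (m : ℝ) + ν)

/-- PDF of the noncentral chi-squared distribution with `k` degrees of freedom and
noncentrality parameter `lam`, for `x > 0`. -/
noncomputable def ncChiSqPDF (k lam x : ℝ) : ℝ :=
  (1 / 2) * Real.exp (-(x + lam) / 2) * (x / lam) ^ (k / 4 - 1 / 2) *
    besselI (k / 2 - 1) (Real.sqrt (lam * x))

/-- PDF of the central chi-squared distribution with `k` degrees of freedom, for `x > 0`. -/
noncomputable def chiSqPDF (k x : ℝ) : ℝ :=
  x ^ (k / 2 - 1) * Real.exp (-x / 2) / (2 ^ (k / 2) * Real.Gamma (k / 2))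

/-!
Dominated convergence. Write `I_ν(z) = (z/2)^ν ∑ₘ (z/2)^(2m) / (m! Γ(m+ν+1))`. For `ν ≥ -1/2`
(i.e. `k ≥ 1`) the inequality `(2m)! Γ(ν+1) ≤ 4^m m! Γ(m+ν+1)` dominates the series termwise by
that of `cosh z / Γ(ν+1)`. This gives locally uniform convergence, hence continuity of the density
in `(λ, x)`, and the bound `I_ν(z) ≤ (z/2)^ν e^z / Γ(ν+1)`. Together with `√(λx) ≤ 2λ + x/8` it
yields `f_{k,λ}(x) ≤ C e^(3λ/2) x^(k/2-1) e^(-3x/8)`, whose `α`-th power is integrable on `(0, ∞)`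
since `(k/2 - 1) α > -1`, i.e. `k > 2 - 2/α`.
-/

open scoped Nat

section Bessel

variable {ν : ℝ}

lemma Gamma_natCast_add_add_one_pos (hν : -1 < ν) (m : ℕ) : 0 < Gamma (m + ν + 1) :=
  Gamma_pos_of_pos (by linarith [(Nat.cast_nonneg m : (0 : ℝ) ≤ m)])

lemma factorial_two_mul_mul_Gamma_le (hν : -(1 / 2) ≤ ν) (m : ℕ) :
    ((2 * m)! : ℝ) * Gamma (ν + 1) ≤ 4 ^ m * m ! * Gamma (m + ν + 1) := by
  induction m with
  | zero => simp
  | succ n ih =>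
    have hpos : (0 : ℝ) < n + ν + 1 := by linarith [n.cast_nonneg (α := ℝ)]
    have hΓ₀ : 0 < Gamma (ν + 1) := Gamma_pos_of_pos (by linarith)
    calc ((2 * (n + 1))! : ℝ) * Gamma (ν + 1)
        = ((2 * n + 2) * (2 * n + 1)) * ((2 * n)! * Gamma (ν + 1)) := by
          rw [show 2 * (n + 1) = 2 * n + 1 + 1 by ring, Nat.factorial_succ, Nat.factorial_succ]
          push_cast; ring
      _ ≤ (4 * (n + 1) * (n + ν + 1)) * (4 ^ n * n ! * Gamma (n + ν + 1)) :=
          mul_le_mul (by nlinarith) ih (by positivity) (by positivity)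
      _ = 4 ^ (n + 1) * (n + 1)! * Gamma (↑(n + 1) + ν + 1) := by
          rw [Nat.cast_succ, add_right_comm _ 1 ν, Gamma_add_one hpos.ne', Nat.factorial_succ]
          push_cast; ring

noncomputable def besselISeries (ν x : ℝ) : ℝ :=
  ∑' m : ℕ, (x / 2) ^ (2 * m) / (m ! * Gamma (m + ν + 1))

lemma besselISeries_term_nonneg (hν : -1 < ν) (x : ℝ) (m : ℕ) :
    0 ≤ (x / 2) ^ (2 * m) / (m ! * Gamma (m + ν + 1)) :=
  div_nonneg ((even_two_mul m).pow_nonneg _)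
    (mul_nonneg (Nat.cast_nonneg _) (Gamma_natCast_add_add_one_pos hν m).le)

lemma besselISeries_term_le (hν : -(1 / 2) ≤ ν) (x : ℝ) (m : ℕ) :
    (x / 2) ^ (2 * m) / (m ! * Gamma (m + ν + 1)) ≤ x ^ (2 * m) / (2 * m)! / Gamma (ν + 1) := by
  have hΓ : 0 < Gamma (ν + 1) := Gamma_pos_of_pos (by linarith)
  have hx : (x / 2) ^ (2 * m) = x ^ (2 * m) / 4 ^ m := by
    rw [div_pow, pow_mul 2, show (2 : ℝ) ^ 2 = 4 by norm_num]
  rw [hx, div_div, div_div, ← mul_assoc]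
  exact div_le_div_of_nonneg_left ((even_two_mul m).pow_nonneg _) (by positivity)
    (factorial_two_mul_mul_Gamma_le hν m)

lemma summable_besselISeries (hν : -(1 / 2) ≤ ν) (x : ℝ) :
    Summable fun m : ℕ => (x / 2) ^ (2 * m) / (m ! * Gamma (m + ν + 1)) :=
  .of_nonneg_of_le (besselISeries_term_nonneg (by linarith) x) (besselISeries_term_le hν x)
    ((hasSum_cosh x).summable.div_const _)

lemma besselISeries_le_cosh (hν : -(1 / 2) ≤ ν) (x : ℝ) :
    besselISeries ν x ≤ cosh x / Gamma (ν + 1) :=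
  hasSum_le (besselISeries_term_le hν x) (summable_besselISeries hν x).hasSum
    ((hasSum_cosh x).div_const _)

lemma continuous_besselISeries (hν : -(1 / 2) ≤ ν) : Continuous (besselISeries ν) := by
  refine continuous_iff_continuousAt.2 fun x => ?_
  set b := |x| + 1
  have hb : ContinuousOn (besselISeries ν) (Icc (-b) b) := by
    refine continuousOn_tsum (fun m => by fun_prop) ((hasSum_cosh b).summable.div_const
      (Gamma (ν + 1))) fun m y hy => ?_
    rw [norm_of_nonneg (besselISeries_term_nonneg (by linarith) y m)]
    refine (besselISeries_term_le hν y m).trans ?_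
    have : y ^ (2 * m) ≤ b ^ (2 * m) := by
      rw [← (even_two_mul m).pow_abs]
      exact pow_le_pow_left₀ (abs_nonneg y) (abs_le.2 hy) _
    gcongr
    exact (Gamma_pos_of_pos (by linarith)).le
  exact hb.continuousAt (Icc_mem_nhds (by linarith [neg_abs_le x]) (by linarith [le_abs_self x]))

lemma besselI_eq_rpow_mul {x : ℝ} (hx : 0 < x) :
    besselI ν x = (x / 2) ^ ν * besselISeries ν x := by
  rw [besselISeries, ← tsum_mul_left]
  refine tsum_congr fun m => ?_
  rw [rpow_add (by positivity), show 2 * (m : ℝ) = ((2 * m : ℕ) : ℝ) by push_cast; ring,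
    rpow_natCast]
  ring

lemma besselI_nonneg (hν : -1 < ν) {x : ℝ} (hx : 0 < x) : 0 ≤ besselI ν x := by
  rw [besselI_eq_rpow_mul hx]
  exact mul_nonneg (by positivity) (tsum_nonneg (besselISeries_term_nonneg hν x))

lemma besselI_le (hν : -(1 / 2) ≤ ν) {x : ℝ} (hx : 0 < x) :
    besselI ν x ≤ (x / 2) ^ ν / Gamma (ν + 1) * exp x := by
  have hΓ : 0 < Gamma (ν + 1) := Gamma_pos_of_pos (by linarith)
  have hcosh : cosh x ≤ exp x := by
    rw [cosh_eq]; linarith [exp_le_exp.2 (by linarith : -x ≤ x)]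
  calc besselI ν x ≤ (x / 2) ^ ν * (cosh x / Gamma (ν + 1)) := by
        rw [besselI_eq_rpow_mul hx]
        exact mul_le_mul_of_nonneg_left (besselISeries_le_cosh hν x) (by positivity)
    _ ≤ (x / 2) ^ ν * (exp x / Gamma (ν + 1)) := by gcongr
    _ = (x / 2) ^ ν / Gamma (ν + 1) * exp x := by ring

lemma continuousAt_besselI (hν : -(1 / 2) ≤ ν) {x : ℝ} (hx : 0 < x) :
    ContinuousAt (besselI ν) x := by
  have hcont : ContinuousAt (fun y => (y / 2) ^ ν * besselISeries ν y) x :=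
    ((continuousAt_id.div_const 2).rpow_const (Or.inl (by positivity))).mul
      (continuous_besselISeries hν).continuousAt
  refine hcont.congr ?_
  filter_upwards [lt_mem_nhds hx] with y hy using (besselI_eq_rpow_mul hy).symm

end Bessel

section NcChiSq

variable {k lam x : ℝ}

lemma rpow_div_mul_rpow_sqrt_mul {s : ℝ} (hlam : 0 < lam) (hx : 0 < x) :
    (x / lam) ^ (s / 2) * sqrt (lam * x) ^ s = x ^ s := by
  rw [sqrt_eq_rpow, ← rpow_mul (by positivity), one_div_mul_eq_div,
    ← mul_rpow (by positivity) (by positivity), show x / lam * (lam * x) = x ^ 2 by field_simp,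
    ← rpow_natCast, ← rpow_mul hx.le]
  congr 1
  push_cast
  ring

lemma sqrt_mul_le_two_mul_add (hlam : 0 ≤ lam) (hx : 0 ≤ x) : sqrt (lam * x) ≤ 2 * lam + x / 8 :=
  (sqrt_le_left (by positivity)).2 (by nlinarith [sq_nonneg (2 * lam - x / 8)])

lemma ncChiSqPDF_nonneg (hk : 0 < k) (hlam : 0 < lam) (hx : 0 < x) : 0 ≤ ncChiSqPDF k lam x := by
  have := besselI_nonneg (by linarith : -1 < k / 2 - 1) (sqrt_pos.2 (mul_pos hlam hx))
  unfold ncChiSqPDF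
  positivity

lemma ncChiSqPDF_le (hk : 1 ≤ k) (hlam : 0 < lam) (hx : 0 < x) :
    ncChiSqPDF k lam x ≤
      exp (3 * lam / 2) / (2 ^ (k / 2) * Gamma (k / 2)) * x ^ (k / 2 - 1) * exp (-(3 / 8) * x) := by
  set ν := k / 2 - 1 with hν
  set z := sqrt (lam * x)
  have hz : 0 < z := sqrt_pos.2 (mul_pos hlam hx)
  have hΓ : 0 < Gamma (ν + 1) := Gamma_pos_of_pos (by linarith)
  calc ncChiSqPDF k lam x
        = 1 / 2 * exp (-(x + lam) / 2) * (x / lam) ^ (ν / 2) * besselI ν z := by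
        rw [ncChiSqPDF, show k / 4 - 1 / 2 = ν / 2 by ring]
    _ ≤ 1 / 2 * exp (-(x + lam) / 2) * (x / lam) ^ (ν / 2) *
          ((z / 2) ^ ν / Gamma (ν + 1) * exp z) := by
        gcongr
        exact besselI_le (by linarith) hz
    _ = exp (-(x + lam) / 2 + z) / (2 * 2 ^ ν * Gamma (ν + 1)) *
          ((x / lam) ^ (ν / 2) * z ^ ν) := by
        rw [div_rpow hz.le zero_le_two, exp_add]; ring
    _ ≤ exp (3 * lam / 2 - 3 / 8 * x) / (2 * 2 ^ ν * Gamma (ν + 1)) * x ^ ν := by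
        rw [rpow_div_mul_rpow_sqrt_mul hlam hx]
        gcongr
        linarith [sqrt_mul_le_two_mul_add hlam.le hx.le]
    _ = _ := by
        rw [← rpow_one_add' zero_le_two (by linarith), show 1 + ν = k / 2 by ring,
          show ν + 1 = k / 2 by ring,
          show 3 * lam / 2 - 3 / 8 * x = 3 * lam / 2 + -(3 / 8) * x by ring, exp_add]
        ring

lemma continuousAt_ncChiSqPDF (hk : 1 ≤ k) (hlam : 0 < lam) (hx : 0 < x) :
    ContinuousAt (fun p : ℝ × ℝ => ncChiSqPDF k p.1 p.2) (lam, x) := by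
  have hsqrt : ContinuousAt (fun p : ℝ × ℝ => sqrt (p.1 * p.2)) (lam, x) := by fun_prop
  have hB : ContinuousAt (fun p : ℝ × ℝ => besselI (k / 2 - 1) (sqrt (p.1 * p.2))) (lam, x) :=
    ContinuousAt.comp (x := (lam, x))
      (continuousAt_besselI (by linarith) (sqrt_pos.2 (mul_pos hlam hx))) hsqrt
  have hR : ContinuousAt (fun p : ℝ × ℝ => (p.2 / p.1) ^ (k / 4 - 1 / 2)) (lam, x) :=
    (continuousAt_snd.div continuousAt_fst hlam.ne').rpow_const (Or.inl (div_pos hx hlam).ne')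
  exact ((by fun_prop : ContinuousAt (fun p : ℝ × ℝ => 1 / 2 * exp (-(p.2 + p.1) / 2)) _).mul
    hR).mul hB

lemma continuousOn_ncChiSqPDF (hk : 1 ≤ k) (hlam : 0 < lam) :
    ContinuousOn (ncChiSqPDF k lam) (Ioi 0) := fun x hx =>
  ((continuousAt_ncChiSqPDF hk hlam hx).comp (f := fun x => (lam, x))
    (by fun_prop)).continuousWithinAt

end NcChiSq

lemma integrableOn_mul_rpow_mul_exp_neg_mul_rpow {c s b α : ℝ} (hc : 0 ≤ c) (hα : 0 < α)
    (hb : 0 < b) (hs : -1 < s * α) :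
    IntegrableOn (fun x => (c * x ^ s * exp (-b * x)) ^ α) (Ioi 0) := by
  have h : IntegrableOn (fun x => c ^ α * (x ^ (s * α) * exp (-(b * α) * x ^ (1 : ℝ)))) (Ioi 0) :=
    (integrableOn_rpow_mul_exp_neg_mul_rpow hs one_pos (mul_pos hb hα)).const_mul _
  refine h.congr_fun (fun x hx => ?_) measurableSet_Ioi
  have hx : 0 < x := hx
  dsimp only
  rw [mul_rpow (by positivity) (exp_pos _).le, mul_rpow hc (by positivity), ← rpow_mul hx.le,
    ← exp_mul, rpow_one]
  ring_nf

theorem continuous_integral_ncChiSqPDF_rpow (α k : ℝ)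
    (hα : 0 < α) (hk : 1 < k) (hk' : k > 2 - 2 / α) :
    ∀ lam₀ : ℝ, 0 < lam₀ →
      Tendsto (fun lam => ∫ x in Ioi (0 : ℝ), ncChiSqPDF k lam x ^ α)
        (nhdsWithin lam₀ (Ioi (0 : ℝ)))
        (nhds (∫ x in Ioi (0 : ℝ), ncChiSqPDF k lam₀ x ^ α)) := by
  intro lam₀ hlam₀
  have hs : -1 < (k / 2 - 1) * α := by
    have := mul_pos (sub_pos.2 hk') hα
    rw [sub_mul, sub_mul, div_mul_cancel₀ _ hα.ne'] at this
    linarith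
  refine tendsto_integral_filter_of_dominated_convergence (fun x =>
      (exp (3 * lam₀) / (2 ^ (k / 2) * Gamma (k / 2)) * x ^ (k / 2 - 1) * exp (-(3 / 8) * x)) ^ α)
    ?_ ?_
    (integrableOn_mul_rpow_mul_exp_neg_mul_rpow (by positivity) hα (by norm_num) hs) ?_
  · filter_upwards [self_mem_nhdsWithin] with lam hlam
    exact ((continuousOn_ncChiSqPDF hk.le hlam).rpow_const fun _ _ => Or.inr hα.le)
      |>.aestronglyMeasurable measurableSet_Ioi
  · filter_upwards [self_mem_nhdsWithin, nhdsWithin_le_nhds (gt_mem_nhds (by linarith :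
      lam₀ < 2 * lam₀))] with lam (hlam : 0 < lam) hlam_lt
    refine ae_restrict_of_forall_mem measurableSet_Ioi fun x (hx : 0 < x) => ?_
    have h0 := ncChiSqPDF_nonneg (zero_lt_one.trans hk) hlam hx
    rw [norm_of_nonneg (rpow_nonneg h0 α)]
    refine rpow_le_rpow h0 ((ncChiSqPDF_le hk.le hlam hx).trans ?_) hα.le
    gcongr
    linarith
  · refine ae_restrict_of_forall_mem measurableSet_Ioi fun x (hx : 0 < x) => ?_
    have hcont : ContinuousAt (fun lam => ncChiSqPDF k lam x) lam₀ :=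
      (continuousAt_ncChiSqPDF hk.le hlam₀ hx).comp (f := fun lam => (lam, x)) (by fun_prop)
    exact ((hcont.rpow_const (Or.inr hα.le)).tendsto).mono_left nhdsWithin_le_nhds
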